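/- arXiv:2204.02294 — 2 statements merged into one kernel-verified Lean document; each statement's English description precedes it below -/
import Mathlib

section
/- Suppose v_D(y,x,a) = ρ·v_U(y,x,a) + t(y,x) for all y,x,a with ρ > 0. Then the full-information policy π_f (which recommends, for each x, an action maximizing v̄_U(x,·)) achieves the maximal defender value among all CT policies, and the optimal ACEL equals ρ·[ Σ_x b_X(x) max_a v̄_U(x,a) − max_a Σ_x b_X(x) v̄_U(x,a) ] ≥ 0, where v̄_U(x,a) = Σ_y b_{Y|X}(y|x) v_U(y,x,a). In particular this quantity is nonnegative by convexity of the max. -/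
/-- When the defender's objective is a positive linear transformation of the
insider's incentive, full information disclosure is optimal among CT policies,
and the optimal ACEL equals
`ρ·[Σ_x b_X(x) max_a v̄_U(x,a) − max_a Σ_x b_X(x) v̄_U(x,a)] ≥ 0`. -/
theorem amenable_insider_full_information_optimal
    {Y X : Type*} [Fintype Y] [Fintype X] {K : ℕ} (hK : 0 < K)
    (b : Y → X → ℝ) (hb_nonneg : ∀ y x, 0 ≤ b y x)
    (hb_sum : ∑ y : Y, ∑ x : X, b y x = 1)
    (bX : X → ℝ) (hbX : ∀ x, bX x = ∑ y : Y, b y x) (hbXpos : ∀ x, 0 < bX x)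
    (vU vD : Y → X → Fin K → ℝ) (ρ : ℝ) (hρ : 0 < ρ) (t : Y → X → ℝ)
    (hdep : ∀ y x a, vD y x a = ρ * vU y x a + t y x)
    (vbarU vbarD : X → Fin K → ℝ)
    (hvbarU : ∀ x a, vbarU x a = ∑ y : Y, (b y x / bX x) * vU y x a)
    (hvbarD : ∀ x a, vbarD x a = ∑ y : Y, (b y x / bX x) * vD y x a)
    (amax : X → Fin K) (hamax : ∀ x (a : Fin K), vbarU x a ≤ vbarU x (amax x))
    (a0 : Fin K)
    (ha0 : ∀ a : Fin K, ∑ x : X, bX x * vbarU x a ≤ ∑ x : X, bX x * vbarU x a0)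
    (πf : X → Fin K → ℝ) (hπf : ∀ x k, πf x k = if k = amax x then 1 else 0) :
    let CT : Set (X → Fin K → ℝ) :=
      {π | (∀ x k, 0 ≤ π x k) ∧ (∀ x, ∑ k : Fin K, π x k = 1) ∧
        ∀ k l : Fin K, 0 ≤ ∑ x : X, bX x * π x k * (vbarU x k - vbarU x l)}
    let defval : (X → Fin K → ℝ) → ℝ :=
      fun π => ∑ x : X, bX x * ∑ k : Fin K, π x k * vbarD x k
    πf ∈ CT ∧ (∀ π ∈ CT, defval π ≤ defval πf) ∧
      defval πf - (∑ x : X, bX x * vbarD x a0) =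
        ρ * ((∑ x : X, bX x * vbarU x (amax x)) - ∑ x : X, bX x * vbarU x a0) ∧
      0 ≤ ρ * ((∑ x : X, bX x * vbarU x (amax x)) - ∑ x : X, bX x * vbarU x a0) := by
  intro CT defval
  -- vbarD is an affine transform of vbarU
  have hvD : ∀ x a, vbarD x a = ρ * vbarU x a + ∑ y : Y, (b y x / bX x) * t y x := by
    intro x a
    rw [hvbarD, hvbarU, Finset.mul_sum, ← Finset.sum_add_distrib]
    refine Finset.sum_congr rfl fun y _ => ?_
    rw [hdep]; ring
  have hvDmax : ∀ x (a : Fin K), vbarD x a ≤ vbarD x (amax x) := by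
    intro x a
    rw [hvD, hvD]
    have := mul_le_mul_of_nonneg_left (hamax x a) hρ.le
    linarith
  -- defval πf = ∑ x bX x * vbarD x (amax x)
  have hsumπf : ∀ (g : X → Fin K → ℝ) x, (∑ k : Fin K, πf x k * g x k) = g x (amax x) := by
    intro g x
    rw [Finset.sum_eq_single (amax x)]
    · rw [hπf]; simp
    · intro k _ hk; rw [hπf]; simp [hk]
    · simp
  have hdefπf : defval πf = ∑ x : X, bX x * vbarD x (amax x) := by
    refine Finset.sum_congr rfl fun x _ => ?_
    rw [hsumπf (fun x k => vbarD x k)]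
  refine ⟨⟨?_, ?_, ?_⟩, ?_, ?_, ?_⟩
  · intro x k; rw [hπf]; positivity
  · intro x
    rw [Finset.sum_eq_single (amax x)]
    · rw [hπf]; simp
    · intro k _ hk; rw [hπf]; simp [hk]
    · simp
  · intro k l
    refine Finset.sum_nonneg fun x _ => ?_
    rw [hπf]
    by_cases h : k = amax x
    · subst h
      have := hamax x l
      have := (hbXpos x).le
      simp only [if_pos, if_true, mul_one]
      nlinarith
    · simp [h]
  · intro π hπ
    obtain ⟨h1, h2, _⟩ := hπ
    rw [hdefπf]
    refine Finset.sum_le_sum fun x _ => ?_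
    have : (∑ k : Fin K, π x k * vbarD x k) ≤ ∑ k : Fin K, π x k * vbarD x (amax x) :=
      Finset.sum_le_sum fun k _ => mul_le_mul_of_nonneg_left (hvDmax x k) (h1 x k)
    have h3 : (∑ k : Fin K, π x k * vbarD x (amax x)) = vbarD x (amax x) := by
      rw [← Finset.sum_mul, h2, one_mul]
    have := (hbXpos x).le
    nlinarith [this]
  · rw [hdefπf, ← Finset.sum_sub_distrib, ← Finset.sum_sub_distrib, Finset.mul_sum]
    refine Finset.sum_congr rfl fun x _ => ?_
    rw [hvD, hvD]
    ring
  · have h := Finset.sum_le_sum fun x (_ : x ∈ Finset.univ) =>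
      mul_le_mul_of_nonneg_left (hamax x a0) (hbXpos x).le
    have : (0:ℝ) ≤ (∑ x : X, bX x * vbarU x (amax x)) - ∑ x : X, bX x * vbarU x a0 := by
      linarith [h]
    positivity
end

section
/- Suppose v_D(y,x,a) = ρ·v_U(y,x,a) + t(y,x) for all y,x,a with ρ ≤ 0. Then for every CT recommendation policy π, the defender's value Σ_x b_X(x) Σ_k π(s^k|x) v̄_D(x,a^k) is at most the value of the zero-information policy, i.e., the optimal ACEL over CT policies equals 0, and it is attained by π_z. -/
/-- When the defender's objective is a nonpositive linear transformation of
the insider's incentive, no CT policy can beat the zero-information policy: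
the optimal ACEL over CT policies is 0 and is attained by `π_z`. -/
theorem malicious_insider_zero_information_optimal
    {X : Type*} [Fintype X] {K : ℕ}
    (bX : X → ℝ) (hbX_nonneg : ∀ x, 0 ≤ bX x) (hbX_sum : ∑ x : X, bX x = 1)
    (vbarU vbarD : X → Fin K → ℝ) (ρ : ℝ) (hρ : ρ ≤ 0) (tbar : X → ℝ)
    (hdep : ∀ x a, vbarD x a = ρ * vbarU x a + tbar x)
    (a0 : Fin K)
    (ha0 : ∀ a : Fin K, ∑ x : X, bX x * vbarU x a ≤ ∑ x : X, bX x * vbarU x a0) :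
    ∀ π : X → Fin K → ℝ, (∀ x k, 0 ≤ π x k) → (∀ x, ∑ k : Fin K, π x k = 1) →
      (∀ k l : Fin K, 0 ≤ ∑ x : X, bX x * π x k * (vbarU x k - vbarU x l)) →
      ∑ x : X, bX x * ∑ k : Fin K, π x k * vbarD x k ≤
        ∑ x : X, bX x * vbarD x a0 := by
  intro π hπ0 hπ1 hCT
  set S := ∑ x : X, bX x * ∑ k : Fin K, π x k * vbarU x k with hS
  set T := ∑ x : X, bX x * vbarU x a0 with hT
  have key : T ≤ S := by
    have h : 0 ≤ ∑ k : Fin K, ∑ x : X, bX x * π x k * (vbarU x k - vbarU x a0) :=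
      Finset.sum_nonneg (fun k _ => hCT k a0)
    have e : ∑ k : Fin K, ∑ x : X, bX x * π x k * (vbarU x k - vbarU x a0) = S - T := by
      rw [Finset.sum_comm, hS, hT, ← Finset.sum_sub_distrib]
      refine Finset.sum_congr rfl (fun x _ => ?_)
      have h1 := hπ1 x
      calc ∑ k : Fin K, bX x * π x k * (vbarU x k - vbarU x a0)
          = bX x * (∑ k : Fin K, π x k * vbarU x k)
            - bX x * (∑ k : Fin K, π x k) * vbarU x a0 := by
            simp only [Finset.mul_sum, Finset.sum_mul, ← Finset.sum_sub_distrib]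
            refine Finset.sum_congr rfl (fun k _ => ?_); ring
        _ = bX x * (∑ k : Fin K, π x k * vbarU x k) - bX x * vbarU x a0 := by
            rw [h1]; ring
    linarith [e ▸ h]
  have hmul : ρ * S ≤ ρ * T := mul_le_mul_of_nonpos_left key hρ
  have eL : ∑ x : X, bX x * ∑ k : Fin K, π x k * vbarD x k
      = ρ * S + ∑ x : X, bX x * tbar x := by
    rw [hS, Finset.mul_sum, ← Finset.sum_add_distrib]
    refine Finset.sum_congr rfl (fun x _ => ?_)
    have h1 := hπ1 x
    calc bX x * ∑ k : Fin K, π x k * vbarD x k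
        = bX x * ∑ k : Fin K, (ρ * (π x k * vbarU x k) + π x k * tbar x) := by
          congr 1; refine Finset.sum_congr rfl (fun k _ => ?_); rw [hdep]; ring
      _ = bX x * (ρ * ∑ k : Fin K, π x k * vbarU x k + (∑ k : Fin K, π x k) * tbar x) := by
          rw [Finset.sum_add_distrib, ← Finset.mul_sum, ← Finset.sum_mul]
      _ = ρ * (bX x * ∑ k : Fin K, π x k * vbarU x k) + bX x * tbar x := by
          rw [h1]; ring
  have eR : ∑ x : X, bX x * vbarD x a0 = ρ * T + ∑ x : X, bX x * tbar x := by
    rw [hT, Finset.mul_sum, ← Finset.sum_add_distrib]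
    refine Finset.sum_congr rfl (fun x _ => ?_)
    rw [hdep]; ring
  rw [eL, eR]
  linarith
end
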